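/- arXiv:1611.06144 — 3 statements merged into one kernel-verified Lean document; each statement's English description precedes it below -/
import Mathlib

section
/- For every group-like element s ∈ G(A), the linear map ŝ : ℤS → K⟨⟨A⟩⟩ defined by ŝ(σ) := Σ_{w∈A*} (s, σ·w) w is an algebra homomorphism from the Malvenuto–Reutenauer algebra (ℤS, *′) to (K⟨⟨A⟩⟩, conc): conc(ŝ(σ) ⊗ ŝ(ρ)) = ŝ(σ *′ ρ) for all σ, ρ ∈ ℤS. -/
/-!
Both sides are `ℤ`-bilinear in `(P, Q)`, so it suffices to take `P = σ ∈ Sₙ`, `Q = ρ ∈ Sₘ`.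
The coefficient of `w` in `ŝ(σ) ŝ(ρ)` vanishes unless `|w| = n + m`, and then it is
`(s, σ·u)(s, ρ·v)` for the factorisation `w = uv` with `|u| = n`. A permutation word acts on
`w` by reading off letters, so it commutes with shuffling: the words `τ·w` for `τ` in the
shuffle of `σ` and `ρ̄` run over the shuffle of `σ·u` and `ρ·v`. Summing `s` over that
shuffle gives `(s, σ·u)(s, ρ·v)` because `s` is a shuffle character.
-/

def shuffle {A : Type*} : List A → List A → Multiset (List A)
  | [], w => {w}
  | u, [] => {u}
  | a :: u, b :: v => (shuffle u (b :: v)).map (a :: ·) + (shuffle (a :: u) v).map (b :: ·)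
termination_by u v => u.length + v.length
decreasing_by all_goals simp +arith +decide

def IsPermWord (w : List ℕ) : Prop := w.Perm (List.range w.length)

/-- MR product on permutation words: `σ *′ ρ := sh(σ ⊗ ρ̄)`, `ρ̄(i) = |σ| + ρ(i)`. -/
def mrW (u v : List ℕ) : Multiset (List ℕ) := shuffle u (v.map (· + u.length))

/-- ℤ-bilinear extension of the MR product. -/
noncomputable def mrMul (p q : List ℕ →₀ ℤ) : List ℕ →₀ ℤ :=
  p.sum fun u a => q.sum fun v b =>
    (a * b) • ((mrW u v).map (fun w => Finsupp.single w (1 : ℤ))).sum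

/-- The action of a permutation word `σ ∈ Sₙ` on words: `σ·(a₁⋯aₙ) = a_{σ1}⋯a_{σn}`
(0-indexed). -/
def applyW {A : Type*} [Inhabited A] (σ : List ℕ) (w : List A) : List A :=
  σ.map fun i => w.getD i default

/-- A series is group-like iff it is a shuffle character with `(s,e)=1`. -/
def GroupLikeSeries {A : Type*} {K : Type*} [CommRing K] [Algebra ℚ K] (s : List A → K) : Prop :=
  s [] = 1 ∧ ∀ u v : List A, ((shuffle u v).map s).sum = s u * s v

/-- `ŝ(σ) := Σ_{w ∈ A*} (s, σ·w) w`, extended ℤ-linearly to `ℤS`, as a series. -/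
noncomputable def shat {A : Type*} [Inhabited A] {K : Type*} [CommRing K] [Algebra ℚ K]
    (s : List A → K) (P : List ℕ →₀ ℤ) : List A → K :=
  fun w => P.sum fun σ c => (c : K) * (if w.length = σ.length then s (applyW σ w) else 0)

/-- The concatenation product of series. -/
def concSeries {A : Type*} {K : Type*} [CommRing K] [Algebra ℚ K]
    (s t : List A → K) : List A → K :=
  fun w => ∑ k ∈ Finset.range (w.length + 1), s (w.take k) * t (w.drop k)

section Shuffle

variable {A B : Type*}

lemma length_of_mem_shuffle {u v τ : List A} (h : τ ∈ shuffle u v) :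
    τ.length = u.length + v.length := by
  induction u, v using shuffle.induct generalizing τ with
  | case1 w => simp_all [shuffle]
  | case2 u => simp_all [shuffle]
  | case3 a u b v ih₁ ih₂ =>
    rw [shuffle] at h
    simp only [Multiset.mem_add, Multiset.mem_map] at h
    rcases h with ⟨x, hx, rfl⟩ | ⟨x, hx, rfl⟩
    · simp [ih₁ hx]; omega
    · simp [ih₂ hx]; omega

lemma map_shuffle (f : A → B) (u v : List A) :
    (shuffle u v).map (List.map f) = shuffle (u.map f) (v.map f) := by
  induction u, v using shuffle.induct with
  | case1 w => simp [shuffle]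
  | case2 u => cases u <;> simp [shuffle]
  | case3 a u b v ih₁ ih₂ =>
    rw [List.map_cons] at ih₁ ih₂
    simp only [shuffle, List.map_cons, Multiset.map_add, Multiset.map_map, ← ih₁, ← ih₂,
      Function.comp_def]

end Shuffle

lemma length_of_mem_mrW {σ ρ τ : List ℕ} (h : τ ∈ mrW σ ρ) :
    τ.length = σ.length + ρ.length := by
  simpa using length_of_mem_shuffle h

lemma IsPermWord.lt_length {σ : List ℕ} (hσ : IsPermWord σ) {i : ℕ} (hi : i ∈ σ) :
    i < σ.length := by
  simpa using hσ.mem_iff.mp hi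

section ApplyW

variable {A : Type*} [Inhabited A]

lemma applyW_take_of_forall_lt {σ : List ℕ} {n : ℕ} (h : ∀ i ∈ σ, i < n) (w : List A) :
    applyW σ (w.take n) = applyW σ w :=
  List.map_congr_left fun i hi => by
    simp [List.getD_eq_getElem?_getD, h i hi]

lemma applyW_map_add (ρ : List ℕ) (n : ℕ) (w : List A) :
    applyW (ρ.map (· + n)) w = applyW ρ (w.drop n) := by
  simp [applyW, List.getD_eq_getElem?_getD, List.getElem?_drop, Nat.add_comm]

lemma map_applyW_shuffle (u v : List ℕ) (w : List A) :
    (shuffle u v).map (applyW · w) = shuffle (applyW u w) (applyW v w) :=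
  map_shuffle _ u v

end ApplyW

section Conc

variable {A ι : Type*} {K : Type*} [CommRing K] [Algebra ℚ K]

def concSeriesBilin : (List A → K) →ₗ[ℤ] (List A → K) →ₗ[ℤ] List A → K :=
  LinearMap.mk₂ ℤ concSeries
    (fun f₁ f₂ g => by ext w; simp [concSeries, add_mul, Finset.sum_add_distrib])
    (fun c f g => by ext w; simp [concSeries, Finset.mul_sum, mul_assoc])
    (fun f g₁ g₂ => by ext w; simp [concSeries, mul_add, Finset.sum_add_distrib])
    (fun c f g => by ext w; simp [concSeries, Finset.mul_sum, mul_left_comm])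

lemma concSeries_linearCombination (f : ι → List A → K) (P Q : ι →₀ ℤ) :
    concSeries (Finsupp.linearCombination ℤ f P) (Finsupp.linearCombination ℤ f Q) =
      P.sum fun i a => Q.sum fun j b => (a * b) • concSeries (f i) (f j) := by
  change concSeriesBilin (A := A) (K := K) _ _ = _
  simp only [Finsupp.linearCombination_apply, map_finsuppSum, LinearMap.finsupp_sum_apply,
    map_zsmul, LinearMap.smul_apply, Finsupp.smul_sum, smul_smul]
  rw [Finsupp.sum_comm]
  simp only [mul_comm]
  rfl

end Conc

section Series

variable {A : Type*} [Inhabited A] {K : Type*} [CommRing K] [Algebra ℚ K]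

def shatWord (s : List A → K) (σ : List ℕ) : List A → K :=
  fun w => if w.length = σ.length then s (applyW σ w) else 0

lemma shat_eq_linearCombination (s : List A → K) (P : List ℕ →₀ ℤ) :
    shat s P = Finsupp.linearCombination ℤ (shatWord s) P := by
  ext w
  simp only [Finsupp.linearCombination_apply, Finsupp.sum, Finset.sum_apply, Pi.smul_apply]
  simp only [shat, shatWord, Finsupp.sum, zsmul_eq_mul]

lemma shat_mrMul (s : List A → K) (P Q : List ℕ →₀ ℤ) :
    shat s (mrMul P Q) =
      P.sum fun σ a => Q.sum fun ρ b => (a * b) • ((mrW σ ρ).map (shatWord s)).sum := by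
  simp only [shat_eq_linearCombination, mrMul, map_finsuppSum, map_zsmul, map_multiset_sum,
    Multiset.map_map, Function.comp_def, Finsupp.linearCombination_single, one_smul]

lemma sum_mrW_applyW {s : List A → K} (hs : GroupLikeSeries s) {σ : List ℕ}
    (hσ : ∀ i ∈ σ, i < σ.length) (ρ : List ℕ) (w : List A) :
    ((mrW σ ρ).map fun τ => s (applyW τ w)).sum =
      s (applyW σ (w.take σ.length)) * s (applyW ρ (w.drop σ.length)) := by
  rw [show (fun τ => s (applyW τ w)) = s ∘ (applyW · w) from rfl, ← Multiset.map_map, mrW,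
    map_applyW_shuffle, applyW_take_of_forall_lt hσ, applyW_map_add, hs.2]

lemma concSeries_shatWord {s : List A → K} (hs : GroupLikeSeries s) {σ : List ℕ}
    (hσ : IsPermWord σ) (ρ : List ℕ) :
    concSeries (shatWord s σ) (shatWord s ρ) = ((mrW σ ρ).map (shatWord s)).sum := by
  ext w
  have hτ (τ) (h : τ ∈ mrW σ ρ) : τ.length = σ.length + ρ.length := length_of_mem_mrW h
  simp only [Pi.multiset_sum_apply, Multiset.map_map, Function.comp_def, concSeries]
  by_cases hw : w.length = σ.length + ρ.length
  -- only the cut of `w` after its first `|σ|` letters contributes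
  · rw [Finset.sum_eq_single_of_mem σ.length (by simp; omega) fun k hk hkσ => by
      rw [Finset.mem_range] at hk
      rw [shatWord, if_neg (by simp; omega), zero_mul]]
    have hsub (τ) (h : τ ∈ mrW σ ρ) : shatWord s τ w = s (applyW τ w) :=
      if_pos (by rw [hτ τ h, hw])
    rw [Multiset.map_congr rfl hsub, sum_mrW_applyW hs (fun _ => hσ.lt_length)]
    simp only [shatWord, List.length_take, List.length_drop]
    rw [if_pos (by omega), if_pos (by omega)]
  · refine (Finset.sum_eq_zero fun k hk => ?_).trans (Multiset.sum_eq_zero fun x hx => ?_).symm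
    · rw [Finset.mem_range] at hk
      simp only [shatWord, List.length_take, List.length_drop]
      split_ifs <;> first | omega | simp
    · obtain ⟨τ, h, rfl⟩ := Multiset.mem_map.1 hx
      exact if_neg (by rw [hτ τ h]; exact hw)

end Series

theorem shat_algebra_hom_general {A : Type*} [Inhabited A] {K : Type*} [CommRing K] [Algebra ℚ K]
    (s : List A → K) (hs : GroupLikeSeries s) (P Q : List ℕ →₀ ℤ)
    (hP : ∀ w ∈ P.support, IsPermWord w) :
    concSeries (shat s P) (shat s Q) = shat s (mrMul P Q) := by
  rw [shat_eq_linearCombination, shat_eq_linearCombination, concSeries_linearCombination,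
    shat_mrMul]
  exact Finsupp.sum_congr fun σ hσ => Finsupp.sum_congr fun ρ _ => by
    rw [concSeries_shatWord hs (hP σ hσ)]

/-- for group-like `s`, the map `ŝ : ℤS → K⟨⟨A⟩⟩` is an algebra
homomorphism from the Malvenuto–Reutenauer algebra `(ℤS, *′)` to `(K⟨⟨A⟩⟩, conc)`:
`conc(ŝ(σ) ⊗ ŝ(ρ)) = ŝ(σ *′ ρ)`. -/
theorem shat_algebra_hom {A : Type*} [Inhabited A] {K : Type*} [CommRing K] [Algebra ℚ K]
    (s : List A → K) (hs : GroupLikeSeries s) (P Q : List ℕ →₀ ℤ)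
    (hP : ∀ w ∈ P.support, IsPermWord w) (hQ : ∀ w ∈ Q.support, IsPermWord w) :
    concSeries (shat s P) (shat s Q) = shat s (mrMul P Q) :=
  shat_algebra_hom_general s hs P Q hP
end

section
/- Shuffle of left-iterated half-shuffle products: for p₁,…,p_{n+m} ∈ K⟨A⟩ with no constant term, sh(m_≻(p₁,…,pₙ) ⊗ m_≻(p_{n+1},…,p_{n+m})) = Σ_{ρ ∈ 1ₙ *′ 1ₘ} m_≻(p_{ρ(1)},…,p_{ρ(n+m)}), where the sum is over the (n+m choose n) permutations appearing in the shuffle 1ₙ *′ 1ₘ of identity permutations. -/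
/-- The right half-shuffle on words:
`u ≻ (v·a) = sh(u ⊗ v)·a` for a letter `a`, and `u ≻ e = 0`. -/
def succW {A : Type*} (u v : List A) : Multiset (List A) :=
  match v.getLast? with
  | none => 0
  | some a => (shuffle u v.dropLast).map (fun w => w ++ [a])

/-- Bilinear extension of the half-shuffle to `K⟨A⟩`. -/
noncomputable def succPoly {A : Type*} {K : Type*} [CommRing K] [Algebra ℚ K]
    (p q : List A →₀ K) : List A →₀ K :=
  p.sum fun u a => q.sum fun v b =>
    (a * b) • ((succW u v).map (fun w => Finsupp.single w (1 : K))).sum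

/-- Bilinear extension of the shuffle product to `K⟨A⟩`. -/
noncomputable def shPoly {A : Type*} {K : Type*} [CommRing K] [Algebra ℚ K]
    (p q : List A →₀ K) : List A →₀ K :=
  p.sum fun u a => q.sum fun v b =>
    (a * b) • ((shuffle u v).map (fun w => Finsupp.single w (1 : K))).sum

/-- Left-iterated half-shuffle product `m_≻(p₁,…,pₙ) = (⋯(p₁ ≻ p₂) ≻ ⋯) ≻ pₙ`. -/
noncomputable def msucc {A : Type*} {K : Type*} [CommRing K] [Algebra ℚ K] :
    List (List A →₀ K) → (List A →₀ K)
  | [] => 0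
  | p :: ps => ps.foldl succPoly p

/-! For `a` without constant term, `sh(a ⊗ b) = a ≻ b + b ≻ a`, and the half-shuffle satisfies the
Zinbiel identity `a ≻ (b ≻ c) = sh(a ⊗ b) ≻ c`; both hold on words and extend bilinearly.
Writing the second factor as `b' ≻ q`, the Zinbiel identity turns `a ≻ b` into `sh(a ⊗ b') ≻ q`,
which by induction is the sum of `m_≻` over the shuffles ending in `q`; symmetrically for `b ≻ a`.
Together these are all shuffles of the two index words, split by their last letter, and
`1ₙ *′ 1ₘ` is exactly the set of shuffles of `1 ⋯ n` with `n+1 ⋯ n+m`. -/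

section Words

variable {A : Type*}

@[simp] lemma shuffle_nil_left (v : List A) : shuffle [] v = {v} := by
  cases v <;> simp [shuffle]

@[simp] lemma shuffle_nil_right (u : List A) : shuffle u [] = {u} := by
  cases u <;> simp [shuffle]

lemma shuffle_cons_cons (a b : A) (u v : List A) :
    shuffle (a :: u) (b :: v) =
      (shuffle u (b :: v)).map (a :: ·) + (shuffle (a :: u) v).map (b :: ·) := by
  simp [shuffle]

lemma shuffle_comm : ∀ u v : List A, shuffle u v = shuffle v u
  | [], v => by simp
  | u, [] => by simp
  | a :: u, b :: v => by
    rw [shuffle_cons_cons, shuffle_cons_cons, shuffle_comm u, shuffle_comm _ v, add_comm]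
termination_by u v => u.length + v.length

lemma shuffle_map {B : Type*} (f : A → B) : ∀ u v : List A,
    (shuffle u v).map (List.map f) = shuffle (u.map f) (v.map f)
  | [], v => by simp
  | u, [] => by simp
  | a :: u, b :: v => by
    have ih₁ := shuffle_map f u (b :: v)
    have ih₂ := shuffle_map f (a :: u) v
    simp only [List.map_cons] at ih₁ ih₂
    simp only [shuffle_cons_cons, List.map_cons, Multiset.map_add, Multiset.map_map, ← ih₁, ← ih₂,
      Function.comp_def]
termination_by u v => u.length + v.length

lemma ne_nil_of_mem_shuffle {u v w : List A} (hu : u ≠ []) (h : w ∈ shuffle u v) : w ≠ [] := by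
  obtain ⟨a, u, rfl⟩ := List.exists_cons_of_ne_nil hu
  cases v with
  | nil => simp_all
  | cons b v =>
    rw [shuffle_cons_cons] at h
    simp only [Multiset.mem_add, Multiset.mem_map] at h
    rcases h with ⟨x, -, rfl⟩ | ⟨x, -, rfl⟩ <;> simp

lemma shuffle_append_singleton (a b : A) : ∀ u v : List A,
    shuffle (u ++ [a]) (v ++ [b]) =
      (shuffle u (v ++ [b])).map (· ++ [a]) + (shuffle (u ++ [a]) v).map (· ++ [b])
  | [], [] => by
    simp [shuffle_cons_cons, add_comm]
  | [], d :: v => by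
    have ih := shuffle_append_singleton a b [] v
    simp only [List.nil_append, List.cons_append] at ih ⊢
    rw [shuffle_cons_cons, ih, shuffle_cons_cons]
    simp only [Multiset.map_add, Multiset.map_map, Function.comp_def, shuffle_nil_left,
      Multiset.map_singleton, List.cons_append]
    abel
  | c :: u, [] => by
    have ih := shuffle_append_singleton a b u []
    simp only [List.nil_append, List.cons_append] at ih ⊢
    rw [shuffle_cons_cons, ih, shuffle_cons_cons]
    simp only [Multiset.map_add, Multiset.map_map, Function.comp_def, shuffle_nil_right,
      Multiset.map_singleton, List.cons_append]
    abel
  | c :: u, d :: v => by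
    have ih₁ := shuffle_append_singleton a b u (d :: v)
    have ih₂ := shuffle_append_singleton a b (c :: u) v
    simp only [List.cons_append] at ih₁ ih₂ ⊢
    rw [shuffle_cons_cons, ih₁, ih₂, shuffle_cons_cons, shuffle_cons_cons]
    simp only [Multiset.map_add, Multiset.map_map, Function.comp_def, List.cons_append]
    abel
termination_by u v => u.length + v.length

lemma bind_shuffle_shuffle : ∀ u v w : List A,
    (shuffle u v).bind (shuffle · w) = (shuffle v w).bind (shuffle u ·)
  | [], v, w => by simpa using (Multiset.bind_singleton (shuffle v w) id).symm
  | u, [], w => by simp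
  | u, v, [] => by simpa using Multiset.bind_singleton (shuffle u v) id
  | a :: u, b :: v, c :: w => by
    have ih₁ := bind_shuffle_shuffle u (b :: v) (c :: w)
    have ih₂ := bind_shuffle_shuffle (a :: u) v (c :: w)
    have ih₃ := bind_shuffle_shuffle (a :: u) (b :: v) w
    simp only [shuffle_cons_cons, Multiset.add_bind, Multiset.bind_map, Multiset.bind_add,
      ← Multiset.map_bind] at ih₁ ih₂ ih₃ ⊢
    rw [ih₁, ih₂, ← ih₃]
    simp only [Multiset.map_add]
    abel
termination_by u v w => u.length + v.length + w.length

@[simp] lemma succW_nil_right (u : List A) : succW u [] = 0 := rfl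

@[simp] lemma succW_append_singleton (u v : List A) (b : A) :
    succW u (v ++ [b]) = (shuffle u v).map (· ++ [b]) := by
  simp [succW]

lemma ne_nil_of_mem_succW {u v w : List A} (h : w ∈ succW u v) : w ≠ [] := by
  induction v using List.reverseRecOn <;> aesop

lemma bind_succW_succW (u v w : List A) :
    (succW v w).bind (succW u) = (shuffle u v).bind (succW · w) := by
  induction w using List.reverseRecOn with
  | nil => simp
  | append_singleton w c =>
    simp only [succW_append_singleton, Multiset.bind_map, ← Multiset.map_bind, bind_shuffle_shuffle]

lemma shuffle_eq_succW_add_succW {u : List A} (hu : u ≠ []) (v : List A) :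
    shuffle u v = succW u v + succW v u := by
  obtain ⟨u, a, rfl⟩ := (u.eq_nil_or_concat').resolve_left hu
  obtain rfl | ⟨v, b, rfl⟩ := v.eq_nil_or_concat'
  · simp
  · rw [shuffle_append_singleton, succW_append_singleton, succW_append_singleton,
      shuffle_comm (v ++ [b]), add_comm]

end Words

section Bilinear
variable {A K : Type*} [CommSemiring K]

noncomputable def wordSum (M : Multiset (List A)) : List A →₀ K :=
  (M.map fun w => Finsupp.single w 1).sum

@[simp] lemma wordSum_add (M N : Multiset (List A)) :
    (wordSum (M + N) : List A →₀ K) = wordSum M + wordSum N := by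
  simp [wordSum]

lemma wordSum_bind {α : Type*} (s : Multiset α) (f : α → Multiset (List A)) :
    (wordSum (s.bind f) : List A →₀ K) = (s.map fun x => wordSum (f x)).sum := by
  simp [wordSum, Multiset.map_bind, Multiset.sum_bind]

lemma wordSum_apply_of_notMem {M : Multiset (List A)} {w : List A} (h : w ∉ M) :
    (wordSum M : List A →₀ K) w = 0 := by
  induction M using Multiset.induction_on with
  | empty => simp [wordSum]
  | cons x M ih =>
    rw [Multiset.mem_cons, not_or] at h
    simp only [wordSum, Multiset.map_cons, Multiset.sum_cons] at ih ⊢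
    simp [ih h.2, Finsupp.single_eq_of_ne h.1]

noncomputable def bilinOfWords (F : List A → List A → Multiset (List A)) :
    (List A →₀ K) →ₗ[K] (List A →₀ K) →ₗ[K] List A →₀ K :=
  Finsupp.lift _ K _ fun u => Finsupp.lift _ K _ fun v => wordSum (F u v)

variable (F : List A → List A → Multiset (List A))

lemma bilinOfWords_apply (p q : List A →₀ K) :
    bilinOfWords F p q = p.sum fun u a => q.sum fun v b => (a * b) • wordSum (F u v) := by
  simp only [bilinOfWords, Finsupp.lift_apply, LinearMap.finsupp_sum_apply, LinearMap.smul_apply,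
    Finsupp.smul_sum, smul_smul]

lemma bilinOfWords_single_single (u v : List A) (a b : K) :
    bilinOfWords F (Finsupp.single u a) (Finsupp.single v b) = (a * b) • wordSum (F u v) := by
  simp [bilinOfWords, smul_smul]

lemma bilinOfWords_single_wordSum (u : List A) (a : K) (M : Multiset (List A)) :
    bilinOfWords F (Finsupp.single u a) (wordSum M) = a • wordSum (M.bind (F u)) := by
  conv_lhs => rw [wordSum]
  rw [map_multiset_sum, wordSum_bind, Multiset.smul_sum, Multiset.map_map, Multiset.map_map]
  congr 1
  exact Multiset.map_congr rfl fun v _ => by simp [bilinOfWords_single_single]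

lemma bilinOfWords_wordSum_single (M : Multiset (List A)) (w : List A) (c : K) :
    bilinOfWords F (wordSum M) (Finsupp.single w c) = c • wordSum (M.bind (F · w)) := by
  conv_lhs => rw [wordSum]
  rw [← LinearMap.flip_apply, map_multiset_sum, wordSum_bind, Multiset.smul_sum, Multiset.map_map,
    Multiset.map_map]
  congr 1
  exact Multiset.map_congr rfl fun v _ => by simp [bilinOfWords_single_single]

lemma bilinOfWords_apply_nil {F : List A → List A → Multiset (List A)}
    (hF : ∀ u v, [] ∉ F u v) (p q : List A →₀ K) : bilinOfWords F p q [] = 0 := by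
  simp [bilinOfWords_apply, Finsupp.sum_apply,
    fun u v => wordSum_apply_of_notMem (K := K) (hF u v)]

lemma bilinOfWords_bilinOfWords {F G F' G' : List A → List A → Multiset (List A)}
    (h : ∀ u v w, (G v w).bind (F u) = (G' u v).bind (F' · w)) (p q r : List A →₀ K) :
    bilinOfWords F p (bilinOfWords G q r) = bilinOfWords F' (bilinOfWords G' p q) r := by
  induction p using Finsupp.induction_linear <;> induction q using Finsupp.induction_linear <;>
    induction r using Finsupp.induction_linear <;>
    simp_all [bilinOfWords_single_single, bilinOfWords_single_wordSum,
      bilinOfWords_wordSum_single, smul_smul, mul_comm, mul_left_comm]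

lemma bilinOfWords_single_left_eq_add_flip {F G : List A → List A → Multiset (List A)} {u : List A}
    (h : ∀ v, F u v = G u v + G v u) (a : K) (q : List A →₀ K) :
    bilinOfWords F (Finsupp.single u a) q =
      bilinOfWords G (Finsupp.single u a) q + bilinOfWords G q (Finsupp.single u a) := by
  induction q using Finsupp.induction_linear with
  | zero => simp
  | add q₁ q₂ h₁ h₂ => simp only [map_add, LinearMap.add_apply, h₁, h₂]; abel
  | single v b => simp [bilinOfWords_single_single, h, mul_comm]

lemma bilinOfWords_eq_add_flip {F G : List A → List A → Multiset (List A)} {p : List A →₀ K}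
    (h : ∀ u ∈ p.support, ∀ v, F u v = G u v + G v u) (q : List A →₀ K) :
    bilinOfWords F p q = bilinOfWords G p q + bilinOfWords G q p := by
  rw [← p.sum_single]
  simp only [map_finsuppSum, LinearMap.finsupp_sum_apply, ← Finsupp.sum_add]
  exact Finsupp.sum_congr fun u hu => bilinOfWords_single_left_eq_add_flip (h u hu) _ _

end Bilinear

section Polynomials
variable {A K : Type*} [CommRing K] [Algebra ℚ K]

lemma succPoly_eq_bilinOfWords (p q : List A →₀ K) : succPoly p q = bilinOfWords succW p q :=
  (bilinOfWords_apply succW p q).symm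

lemma shPoly_eq_bilinOfWords (p q : List A →₀ K) : shPoly p q = bilinOfWords shuffle p q :=
  (bilinOfWords_apply shuffle p q).symm

lemma succPoly_apply_nil (p q : List A →₀ K) : succPoly p q [] = 0 := by
  rw [succPoly_eq_bilinOfWords]
  exact bilinOfWords_apply_nil (fun _ _ h => ne_nil_of_mem_succW h rfl) p q

lemma succPoly_succPoly (p q r : List A →₀ K) :
    succPoly p (succPoly q r) = succPoly (shPoly p q) r := by
  simp only [succPoly_eq_bilinOfWords, shPoly_eq_bilinOfWords]
  exact bilinOfWords_bilinOfWords bind_succW_succW p q r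

lemma shPoly_eq_succPoly_add_succPoly {p : List A →₀ K} (hp : p [] = 0) (q : List A →₀ K) :
    shPoly p q = succPoly p q + succPoly q p := by
  simp only [succPoly_eq_bilinOfWords, shPoly_eq_bilinOfWords]
  refine bilinOfWords_eq_add_flip (fun u hu => shuffle_eq_succW_add_succW ?_) q
  rintro rfl
  exact Finsupp.mem_support_iff.1 hu hp

lemma msucc_append_singleton {ps : List (List A →₀ K)} (hps : ps ≠ []) (q : List A →₀ K) :
    msucc (ps ++ [q]) = succPoly (msucc ps) q := by
  obtain ⟨p, ps, rfl⟩ := List.exists_cons_of_ne_nil hps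
  simp [msucc]

lemma msucc_apply_nil {ps : List (List A →₀ K)} (hps : ps ≠ []) (h : ∀ p ∈ ps, p [] = 0) :
    msucc ps [] = 0 := by
  obtain ⟨ps, q, rfl⟩ := ps.eq_nil_or_concat'.resolve_left hps
  rcases eq_or_ne ps [] with rfl | hps'
  · exact h q (by simp)
  · rw [msucc_append_singleton hps', succPoly_apply_nil]

lemma succPoly_msucc_append_singleton {ps qs : List (List A →₀ K)} (hps : ps ≠ [])
    (hsh : qs ≠ [] → shPoly (msucc ps) (msucc qs) = ((shuffle ps qs).map msucc).sum)
    (q : List A →₀ K) :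
    succPoly (msucc ps) (msucc (qs ++ [q])) =
      ((shuffle ps qs).map fun ρ => msucc (ρ ++ [q])).sum := by
  rcases eq_or_ne qs [] with rfl | hqs
  · simp only [shuffle_nil_right, Multiset.map_singleton, Multiset.sum_singleton,
      msucc_append_singleton hps]
    rfl
  · rw [msucc_append_singleton hqs, succPoly_succPoly, hsh hqs, succPoly_eq_bilinOfWords,
      ← LinearMap.flip_apply, map_multiset_sum, Multiset.map_map]
    refine congrArg _ (Multiset.map_congr rfl fun ρ hρ => ?_)
    rw [Function.comp_apply, LinearMap.flip_apply,
      msucc_append_singleton (ne_nil_of_mem_shuffle hps hρ), succPoly_eq_bilinOfWords]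

theorem shPoly_msucc_msucc {ps qs : List (List A →₀ K)} (hps : ps ≠ []) (hqs : qs ≠ [])
    (h0 : ∀ p ∈ ps ++ qs, p [] = 0) :
    shPoly (msucc ps) (msucc qs) = ((shuffle ps qs).map msucc).sum := by
  induction hN : ps.length + qs.length using Nat.strong_induction_on generalizing ps qs with
  | _ N ih =>
    obtain ⟨ps, p, rfl⟩ := ps.eq_nil_or_concat'.resolve_left hps
    obtain ⟨qs, q, rfl⟩ := qs.eq_nil_or_concat'.resolve_left hqs
    have hp0 : msucc (ps ++ [p]) [] = 0 :=
      msucc_apply_nil hps fun x hx => h0 x (List.mem_append_left _ hx)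
    rw [shPoly_eq_succPoly_add_succPoly hp0,
      succPoly_msucc_append_singleton hps
        (fun hqs' => ih _ (by grind) hps hqs' (fun x hx => h0 x (by grind)) rfl) q,
      succPoly_msucc_append_singleton hqs
        (fun hps' => ih _ (by grind) hqs hps' (fun x hx => h0 x (by grind)) rfl) p,
      shuffle_append_singleton, Multiset.map_add, Multiset.sum_add, Multiset.map_map,
      Multiset.map_map, shuffle_comm (qs ++ [q]) ps, add_comm]
    rfl

end Polynomials

lemma mrW_range_range (n m : ℕ) :
    mrW (List.range n) (List.range m) = shuffle (List.range n) (List.range' n m) := by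
  rw [mrW, List.length_range, List.range'_eq_map_range]
  simp_rw [add_comm n]

/-- for `p₁,…,p_{n+m} ∈ K⟨A⟩` with no constant term,
`sh(m_≻(p₁,…,pₙ) ⊗ m_≻(p_{n+1},…,p_{n+m})) = Σ_{ρ ∈ 1ₙ *′ 1ₘ} m_≻(p_{ρ(1)},…,p_{ρ(n+m)})`. -/
theorem shuffle_of_iterated_half_shuffles {A : Type*} {K : Type*} [CommRing K] [Algebra ℚ K]
    (n m : ℕ) (hn : 1 ≤ n) (hm : 1 ≤ m) (p : ℕ → List A →₀ K)
    (h0 : ∀ i < n + m, (p i) [] = 0) :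
    shPoly (msucc ((List.range n).map p)) (msucc ((List.range' n m).map p)) =
      ((mrW (List.range n) (List.range m)).map fun ρ => msucc (ρ.map p)).sum := by
  rw [shPoly_msucc_msucc, mrW_range_range, ← shuffle_map, Multiset.map_map]
  · rfl
  · simpa [List.range_eq_nil] using Nat.one_le_iff_ne_zero.1 hn
  · simpa using Nat.one_le_iff_ne_zero.1 hm
  · simp only [← List.map_append, List.mem_map, List.mem_append, List.mem_range,
      List.mem_range'_1]
    rintro _ ⟨i, hi, rfl⟩
    exact h0 i (by omega)
end

section
/- Young–Lóeve estimate: if x has finite p-variation and y has finite q-variation on [0,1] with 1/p + 1/q > 1, then for all s ≤ t, |∫_s^t x_r dy_r − x_s(y_t − y_s)| ≤ C_{p,q} ‖x‖_{p-var,[s,t]} ‖y‖_{q-var,[s,t]}, where C_{p,q} depends only on p and q (e.g. C_{p,q} = ζ(1/p + 1/q) with ζ the Riemann zeta function). -/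
/-- `t` is a finite partition `a = t₀ ≤ t₁ ≤ ⋯ ≤ tₙ = b` of `[a,b]`. -/
def IsPartitionOn (a b : ℝ) (n : ℕ) (t : ℕ → ℝ) : Prop :=
  1 ≤ n ∧ t 0 = a ∧ t n = b ∧ ∀ k < n, t k ≤ t (k + 1)

/-- The `p`-variation sum of `x` over a partition. -/
noncomputable def varSum (x : ℝ → ℝ) (p : ℝ) (n : ℕ) (t : ℕ → ℝ) : ℝ :=
  ∑ k ∈ Finset.range n, |x (t (k + 1)) - x (t k)| ^ p

/-- Finite `p`-variation on `[a,b]`. -/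
def FiniteVarOn (x : ℝ → ℝ) (p a b : ℝ) : Prop :=
  ∃ M : ℝ, ∀ n t, IsPartitionOn a b n t → varSum x p n t ≤ M

/-- The `p`-variation norm `‖x‖_{p-var,[a,b]} = sup_D (Σ_k |Δx|^p)^{1/p}`. -/
noncomputable def pVarNorm (x : ℝ → ℝ) (p a b : ℝ) : ℝ :=
  sSup {r : ℝ | ∃ n t, IsPartitionOn a b n t ∧ r = varSum x p n t ^ (1 / p)}

/-- `I` is the Young integral `∫_a^b x dy`, i.e. the mesh-limit of
Riemann–Stieltjes sums. -/
def IsYoungIntegral (x y : ℝ → ℝ) (a b I : ℝ) : Prop :=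
  ∀ ε > 0, ∃ δ > 0, ∀ n t, IsPartitionOn a b n t →
    (∀ k < n, t (k + 1) - t k < δ) →
    |(∑ k ∈ Finset.range n, x (t k) * (y (t (k + 1)) - y (t k))) - I| < ε

/-! Young's argument. Removing the interior node `t_{i+1}` of a partition changes the
Riemann–Stieltjes sum by `Δx_i Δy_{i+1}`. If the partition has `m` interior nodes, Hölder's
inequality with exponent `(1/p + 1/q)⁻¹` and pigeonhole give an `i` with
`|Δx_i| |Δy_{i+1}| ≤ m^{-(1/p + 1/q)} ‖x‖_{p-var} ‖y‖_{q-var}`. Removing the interior nodes one at a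
time shows that every Riemann–Stieltjes sum lies within `ζ(1/p + 1/q) ‖x‖_{p-var} ‖y‖_{q-var}` of
`x_s (y_t - y_s)`, and the integral is a limit of such sums. -/

open Finset

theorem Finset.exists_mul_le_of_sum_rpow_le {ι : Type*} {s : Finset ι} (hs : s.Nonempty)
    {a b : ι → ℝ} {p q A B : ℝ} (hp : 0 < p) (hq : 0 < q)
    (ha : ∀ i ∈ s, 0 ≤ a i) (hb : ∀ i ∈ s, 0 ≤ b i) (hA0 : 0 ≤ A) (hB0 : 0 ≤ B)
    (hA : ∑ i ∈ s, a i ^ p ≤ A ^ p) (hB : ∑ i ∈ s, b i ^ q ≤ B ^ q) :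
    ∃ i ∈ s, a i * b i ≤ (#s : ℝ) ^ (-(p⁻¹ + q⁻¹)) * (A * B) := by
  set r := (p⁻¹ + q⁻¹)⁻¹
  have hr : 0 < r := by positivity
  have hcard : (0 : ℝ) < #s := by exact_mod_cast hs.card_pos
  have hholder : ∑ i ∈ s, (a i * b i) ^ r ≤ (A * B) ^ r :=
    calc ∑ i ∈ s, (a i * b i) ^ r
        ≤ (∑ i ∈ s, a i ^ p) ^ (r / p) * (∑ i ∈ s, b i ^ q) ^ (r / q) :=
          Real.Lr_rpow_le_Lp_mul_Lq_of_nonneg s ⟨(inv_inv _).symm, hp, hq⟩ ha hb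
      _ ≤ (A ^ p) ^ (r / p) * (B ^ q) ^ (r / q) := by
          have := sum_nonneg fun i hi => Real.rpow_nonneg (ha i hi) p
          have := sum_nonneg fun i hi => Real.rpow_nonneg (hb i hi) q
          gcongr
      _ = (A * B) ^ r := by
          rw [← Real.rpow_mul hA0, ← Real.rpow_mul hB0, mul_div_cancel₀ r hp.ne',
            mul_div_cancel₀ r hq.ne', Real.mul_rpow hA0 hB0]
  obtain ⟨i, hi, hle⟩ : ∃ i ∈ s, (a i * b i) ^ r ≤ (A * B) ^ r / #s := by
    refine exists_le_of_sum_le hs ?_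
    rwa [sum_const, nsmul_eq_mul, mul_div_cancel₀ _ hcard.ne']
  refine ⟨i, hi, ?_⟩
  have hab : 0 ≤ a i * b i := mul_nonneg (ha i hi) (hb i hi)
  calc a i * b i = ((a i * b i) ^ r) ^ r⁻¹ := (Real.rpow_rpow_inv hab hr.ne').symm
    _ ≤ ((A * B) ^ r / #s) ^ r⁻¹ := by gcongr
    _ = (#s : ℝ) ^ (-(p⁻¹ + q⁻¹)) * (A * B) := by
      rw [Real.div_rpow (by positivity) hcard.le, Real.rpow_rpow_inv (by positivity) hr.ne',
        inv_inv, Real.rpow_neg hcard.le, div_eq_inv_mul]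

noncomputable def rsSum (x y : ℝ → ℝ) (n : ℕ) (t : ℕ → ℝ) : ℝ :=
  ∑ k ∈ range n, x (t k) * (y (t (k + 1)) - y (t k))

/-- The nodes `t` with `t (i + 1)` removed. -/
def eraseNode (t : ℕ → ℝ) (i : ℕ) (j : ℕ) : ℝ :=
  if j ≤ i then t j else t (j + 1)

theorem IsPartitionOn.eraseNode {a b : ℝ} {n i : ℕ} {t : ℕ → ℝ}
    (ht : IsPartitionOn a b (n + 2) t) (hi : i ≤ n) :
    IsPartitionOn a b (n + 1) (eraseNode t i) := by
  obtain ⟨-, h0, hb, hmono⟩ := ht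
  refine ⟨by omega, by simpa [_root_.eraseNode] using h0, ?_, fun k hk => ?_⟩
  · simpa [_root_.eraseNode, show ¬ n + 1 ≤ i by omega] using hb
  · unfold _root_.eraseNode
    rcases lt_trichotomy k i with hki | rfl | hki
    · simpa [hki.le, show k + 1 ≤ i by omega] using hmono k (by omega)
    · simpa using (hmono k (by omega)).trans (hmono (k + 1) (by omega))
    · simpa [show ¬ k ≤ i by omega, show ¬ k + 1 ≤ i by omega] using hmono (k + 1) (by omega)

theorem rsSum_sub_rsSum_eraseNode (x y : ℝ → ℝ) (t : ℕ → ℝ) {i n : ℕ} (hi : i ≤ n) :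
    rsSum x y (n + 2) t - rsSum x y (n + 1) (eraseNode t i) =
      (x (t (i + 1)) - x (t i)) * (y (t (i + 2)) - y (t (i + 1))) := by
  induction n, hi using Nat.le_induction with
  | base =>
    have hlow : ∀ k ∈ range i, x (eraseNode t i k) *
        (y (eraseNode t i (k + 1)) - y (eraseNode t i k)) =
          x (t k) * (y (t (k + 1)) - y (t k)) := by
      intro k hk
      have hk : k < i := mem_range.mp hk
      simp [_root_.eraseNode, hk.le, show k + 1 ≤ i by omega]
    simp only [rsSum, sum_range_succ, sum_congr rfl hlow]
    simp [_root_.eraseNode]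
    ring
  | succ n hin ih =>
    have hlast : rsSum x y (n + 1 + 1) (eraseNode t i) =
        rsSum x y (n + 1) (eraseNode t i) + x (t (n + 2)) * (y (t (n + 3)) - y (t (n + 2))) := by
      rw [rsSum, sum_range_succ, ← rsSum]
      simp [_root_.eraseNode, show ¬ n + 1 ≤ i by omega, show ¬ n + 1 + 1 ≤ i by omega]
    rw [hlast, rsSum, sum_range_succ, ← rsSum]
    linarith

theorem varSum_nonneg (x : ℝ → ℝ) (p : ℝ) (n : ℕ) (t : ℕ → ℝ) : 0 ≤ varSum x p n t :=
  sum_nonneg fun _ _ => Real.rpow_nonneg (abs_nonneg _) p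

theorem FiniteVarOn.mono_left {x : ℝ → ℝ} {p a b c : ℝ} (h : FiniteVarOn x p a b)
    (hac : a ≤ c) : FiniteVarOn x p c b := by
  obtain ⟨M, hM⟩ := h
  refine ⟨M, fun n t ht => ?_⟩
  obtain ⟨-, h0, hb, hmono⟩ := ht
  let v : ℕ → ℝ := fun j => if j = 0 then a else t (j - 1)
  have hv : IsPartitionOn a b (n + 1) v := by
    refine ⟨by omega, rfl, by simpa [v] using hb, fun k hk => ?_⟩
    rcases k with _ | k
    · simpa [v, h0] using hac
    · simpa [v] using hmono k (by omega)
  have hsplit : varSum x p (n + 1) v = varSum x p n t + |x c - x a| ^ p := by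
    simp [varSum, v, sum_range_succ', h0]
  have := hM (n + 1) v hv
  have := Real.rpow_nonneg (abs_nonneg (x c - x a)) p
  linarith

theorem FiniteVarOn.mono_right {x : ℝ → ℝ} {p a b d : ℝ} (h : FiniteVarOn x p a b)
    (hdb : d ≤ b) : FiniteVarOn x p a d := by
  obtain ⟨M, hM⟩ := h
  refine ⟨M, fun n t ht => ?_⟩
  obtain ⟨-, h0, hd, hmono⟩ := ht
  let v : ℕ → ℝ := fun j => if j ≤ n then t j else b
  have hv : IsPartitionOn a b (n + 1) v := by
    refine ⟨by omega, by simpa [v] using h0, by simp [v], fun k hk => ?_⟩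
    rcases Nat.lt_or_ge k n with hkn | hkn
    · simpa [v, hkn.le, show k + 1 ≤ n by omega] using hmono k hkn
    · obtain rfl : k = n := by omega
      simpa [v, hd] using hdb
  have hsplit : varSum x p (n + 1) v = varSum x p n t + |x b - x d| ^ p := by
    rw [varSum, sum_range_succ, varSum]
    congr 1
    · refine sum_congr rfl fun k hk => ?_
      have hk : k < n := mem_range.mp hk
      simp [v, hk.le, show k + 1 ≤ n by omega]
    · simp [v, hd]
  have := hM (n + 1) v hv
  have := Real.rpow_nonneg (abs_nonneg (x b - x d)) p
  linarith

theorem pVarNorm_nonneg (x : ℝ → ℝ) (p a b : ℝ) : 0 ≤ pVarNorm x p a b :=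
  Real.sSup_nonneg fun _ ⟨n, t, _, hr⟩ => hr ▸ Real.rpow_nonneg (varSum_nonneg x p n t) _

theorem FiniteVarOn.varSum_le_pVarNorm_rpow {x : ℝ → ℝ} {p a b : ℝ} (h : FiniteVarOn x p a b)
    (hp : 0 < p) {n : ℕ} {t : ℕ → ℝ} (ht : IsPartitionOn a b n t) :
    varSum x p n t ≤ pVarNorm x p a b ^ p := by
  obtain ⟨M, hM⟩ := h
  have hbdd : BddAbove {r : ℝ | ∃ n t, IsPartitionOn a b n t ∧ r = varSum x p n t ^ (1 / p)} :=
    ⟨M ^ (1 / p), fun _ ⟨n, t, ht, hr⟩ => hr ▸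
      Real.rpow_le_rpow (varSum_nonneg x p n t) (hM n t ht) (by positivity)⟩
  have hle : varSum x p n t ^ (1 / p) ≤ pVarNorm x p a b := le_csSup hbdd ⟨n, t, ht, rfl⟩
  calc varSum x p n t = (varSum x p n t ^ (1 / p)) ^ p := by
        rw [← Real.rpow_mul (varSum_nonneg x p n t), one_div_mul_cancel hp.ne', Real.rpow_one]
    _ ≤ pVarNorm x p a b ^ p := by gcongr; exact Real.rpow_nonneg (varSum_nonneg x p n t) _

theorem abs_rsSum_sub_le {x y : ℝ → ℝ} {p q s u A B : ℝ} (hp : 0 < p) (hq : 0 < q)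
    (hA0 : 0 ≤ A) (hB0 : 0 ≤ B)
    (hA : ∀ n t, IsPartitionOn s u n t → varSum x p n t ≤ A ^ p)
    (hB : ∀ n t, IsPartitionOn s u n t → varSum y q n t ≤ B ^ q) (n : ℕ) {t : ℕ → ℝ}
    (ht : IsPartitionOn s u (n + 1) t) :
    |rsSum x y (n + 1) t - x s * (y u - y s)| ≤
      (∑ j ∈ range n, ((j : ℝ) + 1) ^ (-(p⁻¹ + q⁻¹))) * (A * B) := by
  induction n generalizing t with
  | zero =>
    obtain ⟨-, h0, hu, -⟩ := ht
    simp [rsSum, h0, hu]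
  | succ n ih =>
    set a : ℕ → ℝ := fun i => |x (t (i + 1)) - x (t i)|
    set b : ℕ → ℝ := fun i => |y (t (i + 2)) - y (t (i + 1))|
    have hsumA : ∑ i ∈ range (n + 1), a i ^ p ≤ A ^ p := by
      refine le_trans ?_ (hA _ _ ht)
      rw [varSum, sum_range_succ _ (n + 1)]
      exact le_add_of_nonneg_right (Real.rpow_nonneg (abs_nonneg _) p)
    have hsumB : ∑ i ∈ range (n + 1), b i ^ q ≤ B ^ q := by
      refine le_trans ?_ (hB _ _ ht)
      rw [varSum, sum_range_succ' _ (n + 1)]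
      exact le_add_of_nonneg_right (Real.rpow_nonneg (abs_nonneg _) q)
    obtain ⟨i, hi, hsmall⟩ := exists_mul_le_of_sum_rpow_le nonempty_range_add_one hp hq
      (fun i _ => abs_nonneg _) (fun i _ => abs_nonneg _) hA0 hB0 hsumA hsumB
    have hi : i ≤ n := Nat.lt_succ_iff.mp (mem_range.mp hi)
    have herase : |rsSum x y (n + 2) t - rsSum x y (n + 1) (eraseNode t i)| = a i * b i := by
      rw [rsSum_sub_rsSum_eraseNode x y t hi, abs_mul]
    calc |rsSum x y (n + 2) t - x s * (y u - y s)|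
        ≤ |rsSum x y (n + 2) t - rsSum x y (n + 1) (eraseNode t i)|
          + |rsSum x y (n + 1) (eraseNode t i) - x s * (y u - y s)| := abs_sub_le _ _ _
      _ ≤ ((n : ℝ) + 1) ^ (-(p⁻¹ + q⁻¹)) * (A * B)
          + (∑ j ∈ range n, ((j : ℝ) + 1) ^ (-(p⁻¹ + q⁻¹))) * (A * B) := by
        rw [card_range, Nat.cast_succ] at hsmall
        rw [herase]
        exact add_le_add hsmall (ih (ht.eraseNode hi))
      _ = (∑ j ∈ range (n + 1), ((j : ℝ) + 1) ^ (-(p⁻¹ + q⁻¹))) * (A * B) := by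
        rw [sum_range_succ]; ring

theorem exists_isPartitionOn_mesh_lt {a b δ : ℝ} (hab : a ≤ b) (hδ : 0 < δ) :
    ∃ n t, IsPartitionOn a b n t ∧ ∀ k < n, t (k + 1) - t k < δ := by
  obtain ⟨n, hn⟩ := exists_nat_gt ((b - a) / δ)
  have hn1 : (0 : ℝ) < n + 1 := by positivity
  have hstep : 0 ≤ (b - a) / (n + 1) := div_nonneg (sub_nonneg.mpr hab) hn1.le
  refine ⟨n + 1, fun k => a + k * ((b - a) / (n + 1)), ⟨by omega, by simp, ?_, fun k _ => ?_⟩,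
    fun k _ => ?_⟩
  · push_cast; field_simp; ring
  · push_cast; nlinarith
  · have hlt : b - a < δ * (n + 1) := by rw [div_lt_iff₀ hδ] at hn; nlinarith
    push_cast
    rw [show a + (k + 1) * ((b - a) / (n + 1)) - (a + k * ((b - a) / (n + 1)))
      = (b - a) / (n + 1) by ring, div_lt_iff₀ hn1]
    exact hlt

theorem IsYoungIntegral.abs_sub_le {x y : ℝ → ℝ} {a b I c K : ℝ}
    (hI : IsYoungIntegral x y a b I) (hab : a ≤ b)
    (hK : ∀ n t, IsPartitionOn a b n t → |rsSum x y n t - c| ≤ K) : |I - c| ≤ K := by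
  refine le_of_forall_pos_lt_add fun ε hε => ?_
  obtain ⟨δ, hδ, hRS⟩ := hI ε hε
  obtain ⟨n, t, ht, hmesh⟩ := exists_isPartitionOn_mesh_lt hab hδ
  have hclose : |rsSum x y n t - I| < ε := hRS n t ht hmesh
  calc |I - c| ≤ |I - rsSum x y n t| + |rsSum x y n t - c| := _root_.abs_sub_le _ _ _
    _ < K + ε := by rw [abs_sub_comm I]; linarith [hK n t ht]

/-- Young–Lóeve estimate: there is a constant `C` depending only on
`p, q` such that for continuous `x` of finite `p`-variation and `y` of finite
`q`-variation with `1/p + 1/q > 1`, for all `0 ≤ s ≤ t ≤ 1`,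
`|∫_s^t x dy − x_s(y_t − y_s)| ≤ C ‖x‖_{p-var,[s,t]} ‖y‖_{q-var,[s,t]}`. -/
theorem young_loeve_estimate (p q : ℝ) (hp : 1 ≤ p) (hq : 1 ≤ q)
    (hpq : 1 / p + 1 / q > 1) :
    ∃ C : ℝ, ∀ x y : ℝ → ℝ,
      ContinuousOn x (Set.Icc 0 1) → ContinuousOn y (Set.Icc 0 1) →
      FiniteVarOn x p 0 1 → FiniteVarOn y q 0 1 →
      ∀ s t : ℝ, 0 ≤ s → s ≤ t → t ≤ 1 → ∀ I : ℝ, IsYoungIntegral x y s t I →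
        |I - x s * (y t - y s)| ≤ C * pVarNorm x p s t * pVarNorm y q s t := by
  have hp0 : 0 < p := by linarith
  have hq0 : 0 < q := by linarith
  have hsummable : Summable fun j : ℕ => ((j : ℝ) + 1) ^ (-(p⁻¹ + q⁻¹)) := by
    simp only [one_div] at hpq
    simpa using (summable_nat_add_iff 1).mpr (Real.summable_nat_rpow.mpr (by linarith))
  refine ⟨∑' j : ℕ, ((j : ℝ) + 1) ^ (-(p⁻¹ + q⁻¹)),
    fun x y _ _ hx hy s t hs hst ht I hI => ?_⟩
  rw [mul_assoc]
  refine hI.abs_sub_le hst fun n u hu => ?_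
  obtain ⟨m, rfl⟩ := Nat.exists_eq_add_of_le' hu.1
  calc |rsSum x y (m + 1) u - x s * (y t - y s)|
      ≤ (∑ j ∈ range m, ((j : ℝ) + 1) ^ (-(p⁻¹ + q⁻¹))) * (pVarNorm x p s t * pVarNorm y q s t) :=
        abs_rsSum_sub_le hp0 hq0 (pVarNorm_nonneg x p s t) (pVarNorm_nonneg y q s t)
          (fun _ _ => ((hx.mono_left hs).mono_right ht).varSum_le_pVarNorm_rpow hp0)
          (fun _ _ => ((hy.mono_left hs).mono_right ht).varSum_le_pVarNorm_rpow hq0) m hu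
    _ ≤ _ := by
      gcongr
      · exact mul_nonneg (pVarNorm_nonneg x p s t) (pVarNorm_nonneg y q s t)
      · exact hsummable.sum_le_tsum _ fun j _ => by positivity
end
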